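/- arXiv:1710.10875 — 2 statements merged into one kernel-verified Lean document; each statement's English description precedes it below -/
import Mathlib

section
/- There is an absolute constant C > 0 such that for every integer N ≥ 1 and every real x ≥ 1, #{n ≤ x : B(n) − β(n) ≥ N} ≤ C·x/N; that is, the bound #{n ≤ x : B(n) − β(n) ≥ N} ≪ x/N holds uniformly in N > 0. -/
/-!
Only primes dividing `n` at least twice contribute to `B n - beta n = ∑ (v_p - 1) p`, and
`((v - 1) p)² ≤ 4 p^v`; since `(s + t)² ≤ 4ab` whenever `s² ≤ 4a`, `t² ≤ 4b` and `a, b ≥ 4`,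
this gives `(B n - beta n)² ≤ 4 P(n)` for the powerful part `P(n) = b²c³` of `n`.
So an `n ≤ x` with `B n - beta n ≥ N` is a multiple of some `b²c³` with `4b²c³ ≥ N²`, and
their number is at most `x ∑_c c⁻³ ∑_{b ≥ N / (2c^{3/2})} b⁻² ≤ (4x / N) ∑_c c^{-3/2}`, a convergent series.
-/

/-- `B n` is the sum of the prime divisors of `n` counted with multiplicity
(so `B 1 = 0`). -/
def B (n : ℕ) : ℕ := (Nat.primeFactorsList n).sum

/-- `beta n` is the sum of the distinct prime divisors of `n` (so `beta 1 = 0`). -/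
def beta (n : ℕ) : ℕ := ∑ p ∈ n.primeFactors, p

open Finset

lemma B_eq_sum_factorization_mul (n : ℕ) :
    B n = ∑ p ∈ n.primeFactors, n.factorization p * p := by
  simp only [B, sum_list_count, Nat.toFinset_factors, Nat.primeFactorsList_count_eq, smul_eq_mul]

lemma B_sub_beta_eq_sum (n : ℕ) :
    B n - beta n =
      ∑ p ∈ n.primeFactors with 2 ≤ n.factorization p, (n.factorization p - 1) * p := by
  have hsplit : ∑ p ∈ n.primeFactors, n.factorization p * p =
      ∑ p ∈ n.primeFactors, (n.factorization p - 1) * p + beta n := by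
    rw [beta, ← sum_add_distrib]
    refine sum_congr rfl fun p hp => ?_
    have : n.factorization p ≠ 0 := Finsupp.mem_support_iff.1 (by rwa [Nat.support_factorization])
    rw [← add_one_mul, Nat.sub_add_cancel (by omega)]
  rw [sum_filter_of_ne fun p _ hne => by have := left_ne_zero_of_mul hne; omega,
    B_eq_sum_factorization_mul, hsplit, Nat.add_sub_cancel]

lemma sq_succ_le_four_mul_two_pow (k : ℕ) : (k + 1) ^ 2 ≤ 4 * 2 ^ k := by
  induction k with
  | zero => norm_num
  | succ k ih =>
    have := k.lt_two_pow_self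
    rw [pow_succ' 2 k]
    nlinarith

lemma sq_pred_mul_le_four_mul_pow {p v : ℕ} (hp : 2 ≤ p) (hv : 2 ≤ v) :
    ((v - 1) * p) ^ 2 ≤ 4 * p ^ v := by
  obtain ⟨k, rfl⟩ := Nat.exists_eq_add_of_le' hv
  calc ((k + 2 - 1) * p) ^ 2 = (k + 1) ^ 2 * p ^ 2 := by rw [Nat.add_sub_assoc one_le_two]; ring
    _ ≤ 4 * 2 ^ k * p ^ 2 := by gcongr; exact sq_succ_le_four_mul_two_pow k
    _ ≤ 4 * p ^ k * p ^ 2 := by gcongr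
    _ = 4 * p ^ (k + 2) := by ring

lemma add_sq_le_four_mul_mul {s t a b : ℕ} (hs : s ^ 2 ≤ 4 * a) (ht : t ^ 2 ≤ 4 * b)
    (ha : 4 ≤ a) (hb : 4 ≤ b) : (s + t) ^ 2 ≤ 4 * (a * b) := by
  nlinarith [two_mul_le_add_sq s t, Nat.mul_le_mul ha hb, Nat.mul_le_mul_left a hb,
    Nat.mul_le_mul_right b ha]

lemma sq_sum_le_four_mul_prod {ι : Type*} (s : Finset ι) (f g : ι → ℕ)
    (hfg : ∀ i ∈ s, f i ^ 2 ≤ 4 * g i) (hg : ∀ i ∈ s, 4 ≤ g i) :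
    (∑ i ∈ s, f i) ^ 2 ≤ 4 * ∏ i ∈ s, g i := by
  rcases s.eq_empty_or_nonempty with rfl | hs
  · simp
  induction hs using Nonempty.cons_induction with
  | singleton i => simpa using hfg i (mem_singleton_self i)
  | cons i s hi hs ih =>
    simp only [mem_cons, forall_eq_or_imp] at hfg hg
    rw [sum_cons, prod_cons]
    obtain ⟨j, hj⟩ := hs
    exact add_sq_le_four_mul_mul hfg.1 (ih hfg.2 hg.2) hg.1
      ((hg.2 j hj).trans (single_le_prod' (fun k hk => by linarith [hg.2 k hk]) hj))

def powerfulPart (n : ℕ) : ℕ :=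
  ∏ p ∈ n.primeFactors with 2 ≤ n.factorization p, p ^ n.factorization p

lemma sq_B_sub_beta_le (n : ℕ) : (B n - beta n) ^ 2 ≤ 4 * powerfulPart n := by
  rw [B_sub_beta_eq_sum, powerfulPart]
  refine sq_sum_le_four_mul_prod _ _ _ (fun p hp => ?_) fun p hp => ?_
  all_goals
    obtain ⟨hp, hv⟩ := mem_filter.1 hp
    have hp2 := (Nat.prime_of_mem_primeFactors hp).two_le
  · exact sq_pred_mul_le_four_mul_pow hp2 hv
  · exact (Nat.pow_le_pow_left hp2 2).trans (Nat.pow_le_pow_right (by omega) hv)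

lemma powerfulPart_dvd (n : ℕ) : powerfulPart n ∣ n := by
  rcases eq_or_ne n 0 with rfl | hn
  · exact dvd_zero _
  calc powerfulPart n ∣ ∏ p ∈ n.primeFactors, p ^ n.factorization p :=
        prod_dvd_prod_of_subset _ _ _ (filter_subset _ _)
    _ = n := by
        rw [← Nat.prod_factorization_eq_prod_primeFactors, Nat.prod_factorization_pow_eq_self hn]

lemma exists_sq_mul_cube_eq_powerfulPart (n : ℕ) :
    ∃ b c, 0 < b ∧ 0 < c ∧ b ^ 2 * c ^ 3 = powerfulPart n := by
  have hpos : ∀ p e, p ∈ n.primeFactors → 0 < p ^ e := fun p e hp =>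
    pow_pos (Nat.prime_of_mem_primeFactors hp).pos e
  refine ⟨∏ p ∈ n.primeFactors with 2 ≤ n.factorization p,
      p ^ ((n.factorization p - 3 * (n.factorization p % 2)) / 2),
    ∏ p ∈ n.primeFactors with 2 ≤ n.factorization p, p ^ (n.factorization p % 2),
    prod_pos fun p hp => hpos p _ (mem_filter.1 hp).1,
    prod_pos fun p hp => hpos p _ (mem_filter.1 hp).1, ?_⟩
  rw [← prod_pow, ← prod_pow, ← prod_mul_distrib, powerfulPart]
  refine prod_congr rfl fun p hp => ?_
  have := (mem_filter.1 hp).2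
  -- an exponent `v ≥ 2` is `2 * ((v - 3 * (v % 2)) / 2) + 3 * (v % 2)`
  rw [← pow_mul, ← pow_mul, ← pow_add]
  congr 1
  omega

lemma card_filter_dvd_Icc_floor_le {x : ℝ} (hx : 0 ≤ x) (d : ℕ) :
    (#{n ∈ Icc 1 ⌊x⌋₊ | d ∣ n} : ℝ) ≤ x / d := by
  rw [← zero_add 1, Icc_add_one_left_eq_Ioc, Nat.Ioc_filter_dvd_card_eq_div]
  exact Nat.cast_div_le.trans (div_le_div_of_nonneg_right (Nat.floor_le hx) d.cast_nonneg)

lemma card_filter_B_sub_beta_ge_le_sum (N M : ℕ) :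
    #{n ∈ Icc 1 M | N ≤ B n - beta n} ≤
      ∑ q ∈ Icc 1 M ×ˢ Icc 1 M with N ^ 2 ≤ 4 * (q.1 ^ 2 * q.2 ^ 3),
        #{n ∈ Icc 1 M | q.1 ^ 2 * q.2 ^ 3 ∣ n} := by
  refine (card_le_card fun n hn => ?_).trans card_biUnion_le
  obtain ⟨⟨hn1, hnM⟩, hN⟩ : (1 ≤ n ∧ n ≤ M) ∧ N ≤ B n - beta n := by simpa using hn
  obtain ⟨b, c, hb, hc, hbc⟩ := exists_sq_mul_cube_eq_powerfulPart n
  have hdvd : b ^ 2 * c ^ 3 ∣ n := hbc ▸ powerfulPart_dvd n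
  have hle : b ^ 2 * c ^ 3 ≤ M := (Nat.le_of_dvd (by omega) hdvd).trans hnM
  have hbM : b ≤ M := calc
    b ≤ b ^ 2 := Nat.le_self_pow two_ne_zero b
    _ ≤ b ^ 2 * c ^ 3 := Nat.le_mul_of_pos_right _ (by positivity)
    _ ≤ M := hle
  have hcM : c ≤ M := calc
    c ≤ c ^ 3 := Nat.le_self_pow three_ne_zero c
    _ ≤ b ^ 2 * c ^ 3 := Nat.le_mul_of_pos_left _ (by positivity)
    _ ≤ M := hle
  simp only [mem_biUnion, mem_filter, mem_Icc, mem_product]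
  refine ⟨(b, c), ⟨⟨⟨hb, hbM⟩, hc, hcM⟩, ?_⟩, ⟨hn1, hnM⟩, hdvd⟩
  rw [hbc]
  exact (Nat.pow_le_pow_left hN 2).trans (sq_B_sub_beta_le n)

lemma sum_inv_sq_le_of_le {T : Finset ℕ} {R : ℝ} (hR : 0 < R) (hT : ∀ b ∈ T, R ≤ b) :
    ∑ b ∈ T, ((b : ℝ) ^ 2)⁻¹ ≤ 2 / R := by
  have hceil : 1 ≤ ⌈R⌉₊ := Nat.one_le_ceil_iff.2 hR
  have hsub : T ⊆ Ioo (⌈R⌉₊ - 1) (T.sup id + 1) := fun b hb => by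
    have := Nat.ceil_le.2 (hT b hb)
    have : b ≤ T.sup id := le_sup (f := id) hb
    simp only [mem_Ioo]
    omega
  calc ∑ b ∈ T, ((b : ℝ) ^ 2)⁻¹ ≤ ∑ b ∈ Ioo (⌈R⌉₊ - 1) (T.sup id + 1), ((b : ℝ) ^ 2)⁻¹ :=
        sum_le_sum_of_subset_of_nonneg hsub fun _ _ _ => by positivity
    _ ≤ 2 / ((⌈R⌉₊ - 1 : ℕ) + 1) := sum_Ioo_inv_sq_le _ _
    _ ≤ 2 / R := by
        rw [Nat.cast_sub hceil, Nat.cast_one, sub_add_cancel]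
        gcongr
        exact Nat.le_ceil R

lemma sum_inv_sq_mul_cube_le {N c : ℕ} (hN : 0 < N) (hc : 0 < c) {T : Finset ℕ}
    (hT : ∀ b ∈ T, N ^ 2 ≤ 4 * (b ^ 2 * c ^ 3)) :
    ∑ b ∈ T, ((b : ℝ) ^ 2 * (c : ℝ) ^ 3)⁻¹ ≤ 4 / N * ((c : ℝ) ^ (3 / 2 : ℝ))⁻¹ := by
  set r := (c : ℝ) ^ (3 / 2 : ℝ)
  have hr : 0 < r := by positivity
  have hr2 : r ^ 2 = (c : ℝ) ^ 3 := by
    rw [← Real.rpow_natCast, ← Real.rpow_mul c.cast_nonneg]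
    norm_num
  have hbR : ∀ b ∈ T, N / (2 * r) ≤ b := fun b hb => by
    have hsq : (N : ℝ) ^ 2 ≤ (2 * b * r) ^ 2 := by
      rw [mul_pow, mul_pow, hr2]
      exact_mod_cast (hT b hb).trans_eq (by ring)
    rw [div_le_iff₀ (by positivity)]
    linarith [le_of_pow_le_pow_left₀ two_ne_zero (by positivity) hsq]
  calc ∑ b ∈ T, ((b : ℝ) ^ 2 * (c : ℝ) ^ 3)⁻¹ = (r ^ 2)⁻¹ * ∑ b ∈ T, ((b : ℝ) ^ 2)⁻¹ := by
        rw [mul_sum, hr2]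
        exact sum_congr rfl fun b _ => by rw [mul_inv, mul_comm]
    _ ≤ (r ^ 2)⁻¹ * (2 / (N / (2 * r))) := by
        gcongr
        exact sum_inv_sq_le_of_le (by positivity) hbR
    _ = 4 / N * r⁻¹ := by
        field_simp
        ring

/-- `#{n ≤ x : B(n) - β(n) ≥ N} ≪ x / N`, uniformly in `N > 0`. -/
theorem count_B_sub_beta_ge :
    ∃ C : ℝ, 0 < C ∧ ∀ N : ℕ, 1 ≤ N → ∀ x : ℝ, 1 ≤ x →
      (((Finset.Icc 1 ⌊x⌋₊).filter (fun n => N ≤ B n - beta n)).card : ℝ) ≤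
        C * x / (N : ℝ) := by
  have hsum : Summable fun c : ℕ => ((c : ℝ) ^ (3 / 2 : ℝ))⁻¹ :=
    Real.summable_nat_rpow_inv.2 (by norm_num)
  set S := ∑' c : ℕ, ((c : ℝ) ^ (3 / 2 : ℝ))⁻¹
  have hS : 0 < S := hsum.tsum_pos (fun _ => by positivity) 1 (by norm_num)
  refine ⟨4 * S, by positivity, fun N hN x hx => ?_⟩
  set M := ⌊x⌋₊
  calc (#{n ∈ Icc 1 M | N ≤ B n - beta n} : ℝ)
      ≤ ∑ q ∈ Icc 1 M ×ˢ Icc 1 M with N ^ 2 ≤ 4 * (q.1 ^ 2 * q.2 ^ 3),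
          (#{n ∈ Icc 1 M | q.1 ^ 2 * q.2 ^ 3 ∣ n} : ℝ) := by
        exact_mod_cast card_filter_B_sub_beta_ge_le_sum N M
    _ ≤ ∑ q ∈ Icc 1 M ×ˢ Icc 1 M with N ^ 2 ≤ 4 * (q.1 ^ 2 * q.2 ^ 3),
          x / ((q.1 : ℝ) ^ 2 * (q.2 : ℝ) ^ 3) := sum_le_sum fun q _ => by
        exact_mod_cast card_filter_dvd_Icc_floor_le (by linarith) _
    _ = x * ∑ c ∈ Icc 1 M, ∑ b ∈ Icc 1 M with N ^ 2 ≤ 4 * (b ^ 2 * c ^ 3),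
          ((b : ℝ) ^ 2 * (c : ℝ) ^ 3)⁻¹ := by
        simp only [div_eq_mul_inv]
        rw [← mul_sum, sum_filter, sum_product_right]
        simp only [sum_filter]
    _ ≤ x * ∑ c ∈ Icc 1 M, 4 / N * ((c : ℝ) ^ (3 / 2 : ℝ))⁻¹ := by
        gcongr with c hc
        exact sum_inv_sq_mul_cube_le hN (mem_Icc.1 hc).1 fun b hb => (mem_filter.1 hb).2
    _ ≤ x * (4 / N * S) := by
        rw [← mul_sum]
        gcongr
        exact hsum.sum_le_tsum _ fun _ _ => by positivity
    _ = 4 * S * x / N := by ring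
end

section
/- The sequence of iterates B_1^k(n) is eventually periodic for every integer n ≥ 2, and the only cycles of B_1 are the fixed point (4) and the 2-cycle (5,6): for every n ≥ 2 there exists k ≥ 0 such that B_1^k(n) ∈ {4, 5, 6}, and moreover B_1(4) = 4, B_1(5) = 6, B_1(6) = 5. -/
/-- `Ba a n = n + a` if `n` is prime, and `B n` otherwise. -/
def Ba (a n : ℕ) : ℕ := if n.Prime then n + a else B n

theorem Function.exists_iterate_mem_of_descent {α : Type*} {f : α → α} (μ : α → ℕ)
    {P : α → Prop} {T : Set α}
    (hdesc : ∀ x, P x → x ∉ T → ∃ k, f^[k] x ∈ T ∨ P (f^[k] x) ∧ μ (f^[k] x) < μ x) :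
    ∀ x, P x → ∃ k, f^[k] x ∈ T := by
  suffices ∀ m x, μ x = m → P x → ∃ k, f^[k] x ∈ T from fun x ↦ this _ x rfl
  intro m
  induction m using Nat.strong_induction_on with
  | _ m ih =>
    rintro x rfl hx
    by_cases hxT : x ∈ T
    · exact ⟨0, hxT⟩
    obtain ⟨k, hk | ⟨hkP, hkμ⟩⟩ := hdesc x hx hxT
    · exact ⟨k, hk⟩
    · obtain ⟨j, hj⟩ := ih _ hkμ _ rfl hkP
      exact ⟨j + k, by rwa [Function.iterate_add_apply]⟩

lemma B_mul {a b : ℕ} (ha : a ≠ 0) (hb : b ≠ 0) : B (a * b) = B a + B b := by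
  rw [B, (Nat.perm_primeFactorsList_mul ha hb).sum_eq, List.sum_append, B, B]

lemma B_prime {p : ℕ} (hp : p.Prime) : B p = p := by
  simp [B, Nat.primeFactorsList_prime hp]

lemma Nat.exists_mul_eq_of_not_prime {n : ℕ} (hn : 2 ≤ n) (hp : ¬ n.Prime) :
    ∃ a b, 2 ≤ a ∧ 2 ≤ b ∧ a < n ∧ b < n ∧ a * b = n := by
  obtain ⟨a, b, ha, hb, rfl⟩ := (Nat.not_prime_iff_exists_mul_eq hn).1 hp
  refine ⟨a, b, ?_, ?_, ha, hb, rfl⟩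
  · by_contra!; interval_cases a <;> omega
  · by_contra!; interval_cases b <;> omega

lemma B_le (n : ℕ) : B n ≤ n := by
  induction n using Nat.strong_induction_on with
  | _ n ih =>
    rcases lt_or_ge n 2 with hn | hn
    · interval_cases n <;> simp [B]
    by_cases hp : n.Prime
    · exact (B_prime hp).le
    obtain ⟨a, b, ha2, hb2, ha, hb, rfl⟩ := Nat.exists_mul_eq_of_not_prime hn hp
    calc B (a * b) = B a + B b := B_mul (by omega) (by omega)
      _ ≤ a + b := add_le_add (ih a ha) (ih b hb)
      _ ≤ a * b := add_le_mul ha2 hb2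

lemma two_le_B {n : ℕ} (hn : 2 ≤ n) : 2 ≤ B n :=
  have hmem : n.minFac ∈ n.primeFactorsList :=
    (Nat.mem_primeFactorsList (by omega)).2 ⟨Nat.minFac_prime (by omega), Nat.minFac_dvd n⟩
  (Nat.minFac_prime (by omega)).two_le.trans (List.le_sum_of_mem hmem)

lemma B_lt_of_not_prime {n : ℕ} (hn : 2 ≤ n) (hp : ¬ n.Prime) (h4 : n ≠ 4) : B n < n := by
  obtain ⟨a, b, ha2, hb2, -, -, rfl⟩ := Nat.exists_mul_eq_of_not_prime hn hp
  have hab : 3 ≤ a ∨ 3 ≤ b := by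
    by_contra! h
    obtain ⟨rfl, rfl⟩ : a = 2 ∧ b = 2 := by omega
    exact h4 rfl
  calc B (a * b) = B a + B b := B_mul (by omega) (by omega)
    _ ≤ a + b := add_le_add (B_le a) (B_le b)
    _ < a * b := by rcases hab with h | h <;> nlinarith

lemma B_succ_lt_of_odd {n : ℕ} (hodd : Odd n) (h7 : 7 ≤ n) : B (n + 1) < n := by
  obtain ⟨m, rfl⟩ := hodd
  calc B (2 * m + 1 + 1) = B 2 + B (m + 1) := B_mul two_ne_zero m.succ_ne_zero
    _ ≤ 2 + (m + 1) := add_le_add (B_prime Nat.prime_two).le (B_le _)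
    _ < 2 * m + 1 := by omega

lemma Ba_of_prime {a n : ℕ} (hn : n.Prime) : Ba a n = n + a := if_pos hn

lemma Ba_of_not_prime {a n : ℕ} (hn : ¬ n.Prime) : Ba a n = B n := if_neg hn

lemma Ba_one_iterate_descends {n : ℕ} (hn : 2 ≤ n) (h456 : n ∉ ({4, 5, 6} : Set ℕ)) :
    ∃ k, (Ba 1)^[k] n ∈ ({4, 5, 6} : Set ℕ) ∨
      2 ≤ (Ba 1)^[k] n ∧ (Ba 1)^[k] n < n := by
  simp only [Set.mem_insert_iff, Set.mem_singleton_iff, not_or] at h456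
  by_cases hp : n.Prime
  · rcases hp.eq_two_or_odd' with rfl | hodd
    · refine ⟨2, Or.inl ?_⟩
      simp [Ba_of_prime Nat.prime_two, Ba_of_prime Nat.prime_three]
    obtain rfl | h7 : n = 3 ∨ 7 ≤ n := by have := Nat.odd_iff.1 hodd; omega
    · exact ⟨1, Or.inl (by simp [Ba_of_prime Nat.prime_three])⟩
    have hsucc : ¬ (n + 1).Prime := fun hq ↦ by
      have := hq.even_iff.1 hodd.add_one
      omega
    refine ⟨2, Or.inr ?_⟩
    simp only [Function.iterate_succ_apply, Function.iterate_zero_apply, Ba_of_prime hp,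
      Ba_of_not_prime hsucc]
    exact ⟨two_le_B (by omega), B_succ_lt_of_odd hodd h7⟩
  · refine ⟨1, Or.inr ?_⟩
    simp only [Function.iterate_one, Ba_of_not_prime hp]
    exact ⟨two_le_B hn, B_lt_of_not_prime hn hp h456.1⟩

/-- `B₁` is eventually periodic on every `n ≥ 2`, with the only cycles being
the fixed point `(4)` and the 2-cycle `(5, 6)`. -/
theorem B1_eventually_periodic :
    (∀ n : ℕ, 2 ≤ n → ∃ k : ℕ, (Ba 1)^[k] n ∈ ({4, 5, 6} : Set ℕ)) ∧
      Ba 1 4 = 4 ∧ Ba 1 5 = 6 ∧ Ba 1 6 = 5 := by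
  refine ⟨Function.exists_iterate_mem_of_descent id fun n hn h ↦ Ba_one_iterate_descends hn h,
    ?_, Ba_of_prime Nat.prime_five, ?_⟩
  · rw [Ba_of_not_prime (by norm_num), show 4 = 2 * 2 from rfl, B_mul two_ne_zero two_ne_zero,
      B_prime Nat.prime_two]
  · rw [Ba_of_not_prime (by norm_num), show 6 = 2 * 3 from rfl, B_mul two_ne_zero three_ne_zero,
      B_prime Nat.prime_two, B_prime Nat.prime_three]
end
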